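/- arXiv:1410.0215 — 2 statements merged into one kernel-verified Lean document; each statement's English description precedes it below -/
import Mathlib

section
/- With K, τ², A = K + τ²I, σ², 𝟙, e_i as in the nugget variance theorem, the predictive variance s²_i = σ²(τ² - τ⁴ e_iᵀ A⁻¹ e_i + τ⁴ (e_iᵀ A⁻¹ 𝟙)²/(𝟙ᵀ A⁻¹ 𝟙)) satisfies 0 ≤ s²_i ≤ 2σ²τ². Moreover s²_i ≥ σ²(τ² - τ⁴ e_iᵀ A⁻¹ e_i) ≥ 0. -/
/-!
With `q = eᵢᵀA⁻¹eᵢ`, `p = eᵢᵀA⁻¹𝟙` and `d = 𝟙ᵀA⁻¹𝟙`, Cauchy–Schwarz for the inner product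
defined by `A⁻¹` gives `0 ≤ p² / d ≤ q`, so `s²ᵢ` lies between `σ²(τ² - τ⁴q)` and `σ²τ²`.
Since `A ≥ τ² I`, we have `A⁻¹ ≤ τ⁻² I`, hence `τ²q ≤ 1` and the lower bound is nonnegative.
-/

open Matrix

variable {ι : Type*}

theorem Matrix.PosSemidef.posDef_add_smul_one [DecidableEq ι] {K : Matrix ι ι ℝ}
    (hK : K.PosSemidef) {τ : ℝ} (hτ : 0 < τ) : (K + τ • (1 : Matrix ι ι ℝ)).PosDef := by
  rw [smul_one_eq_diagonal]
  exact PosDef.posSemidef_add hK (PosDef.diagonal fun _ => hτ)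

variable [Fintype ι]

theorem Matrix.PosSemidef.dotProduct_mulVec_sq_le {B : Matrix ι ι ℝ} (hB : B.PosSemidef)
    (u v : ι → ℝ) : (u ⬝ᵥ B *ᵥ v) ^ 2 ≤ (u ⬝ᵥ B *ᵥ u) * (v ⬝ᵥ B *ᵥ v) := by
  let := B.toSeminormedAddCommGroup hB
  let := B.toInnerProductSpace hB
  have h := real_inner_mul_inner_self_le u v
  change (B *ᵥ v) ⬝ᵥ star u * ((B *ᵥ v) ⬝ᵥ star u) ≤
    ((B *ᵥ u) ⬝ᵥ star u) * ((B *ᵥ v) ⬝ᵥ star v) at h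
  simpa only [star_trivial, dotProduct_comm _ u, dotProduct_comm _ v, sq] using h

/-- When `v ⬝ᵥ B *ᵥ v = 0` the left-hand side is `0` by the convention `x / 0 = 0`. -/
theorem Matrix.PosSemidef.dotProduct_mulVec_sq_div_le {B : Matrix ι ι ℝ} (hB : B.PosSemidef)
    (u v : ι → ℝ) : (u ⬝ᵥ B *ᵥ v) ^ 2 / (v ⬝ᵥ B *ᵥ v) ≤ u ⬝ᵥ B *ᵥ u :=
  div_le_of_le_mul₀ (hB.dotProduct_mulVec_nonneg v) (hB.dotProduct_mulVec_nonneg u)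
    (hB.dotProduct_mulVec_sq_le u v)

theorem Matrix.PosSemidef.mul_dotProduct_inv_add_smul_one_mulVec_le [DecidableEq ι]
    {K : Matrix ι ι ℝ} (hK : K.PosSemidef) {τ : ℝ} (hτ : 0 < τ) (x : ι → ℝ) :
    τ * (x ⬝ᵥ (K + τ • (1 : Matrix ι ι ℝ))⁻¹ *ᵥ x) ≤ x ⬝ᵥ x := by
  set A := K + τ • (1 : Matrix ι ι ℝ)
  set y := A⁻¹ *ᵥ x
  have hAy : A *ᵥ y = x := by
    have hdet := (isUnit_iff_isUnit_det A).mp (hK.posDef_add_smul_one hτ).isUnit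
    rw [mulVec_mulVec, mul_nonsing_inv A hdet, one_mulVec]
  have hyAy : x ⬝ᵥ y = y ⬝ᵥ K *ᵥ y + τ * (y ⬝ᵥ y) := by
    rw [← hAy, dotProduct_comm, add_mulVec, dotProduct_add, smul_mulVec, one_mulVec,
      dotProduct_smul, smul_eq_mul]
  have hτy : τ * (y ⬝ᵥ y) ≤ x ⬝ᵥ y := by
    have hKy := hK.dotProduct_mulVec_nonneg y
    rw [star_trivial] at hKy
    linarith
  -- `0 ≤ ‖x - τ y‖² = ‖x‖² - 2τ ⟪x, y⟫ + τ² ‖y‖²`, and `τ² ‖y‖² ≤ τ ⟪x, y⟫`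
  have hsq : 0 ≤ (x - τ • y) ⬝ᵥ (x - τ • y) := by
    simpa using (PosSemidef.one (n := ι) (R := ℝ)).dotProduct_mulVec_nonneg (x - τ • y)
  simp only [sub_dotProduct, dotProduct_sub, smul_dotProduct, dotProduct_smul, smul_eq_mul,
    dotProduct_comm y x] at hsq
  nlinarith [mul_le_mul_of_nonneg_left hτy hτ.le]

theorem stmt_4_general (n : ℕ) (K : Matrix (Fin n) (Fin n) ℝ) (hK : K.PosSemidef)
    (τ2 σ2 : ℝ) (hτ : 0 < τ2) (hσ : 0 < σ2) (i : Fin n)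
    (A : Matrix (Fin n) (Fin n) ℝ) (hA : A = K + τ2 • (1 : Matrix (Fin n) (Fin n) ℝ))
    (one : Fin n → ℝ)
    (s2 : ℝ)
    (hs2 : s2 = σ2 * (τ2 - τ2 ^ 2 * ((Pi.single i 1 : Fin n → ℝ) ⬝ᵥ A⁻¹.mulVec (Pi.single i 1)) +
        τ2 ^ 2 * ((Pi.single i 1 : Fin n → ℝ) ⬝ᵥ A⁻¹.mulVec one) ^ 2 /
          (one ⬝ᵥ A⁻¹.mulVec one))) :
    (0 ≤ s2 ∧ s2 ≤ 2 * σ2 * τ2) ∧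
    σ2 * (τ2 - τ2 ^ 2 * ((Pi.single i 1 : Fin n → ℝ) ⬝ᵥ A⁻¹.mulVec (Pi.single i 1))) ≤ s2 ∧
    0 ≤ σ2 * (τ2 - τ2 ^ 2 * ((Pi.single i 1 : Fin n → ℝ) ⬝ᵥ A⁻¹.mulVec (Pi.single i 1))) := by
  set e : Fin n → ℝ := Pi.single i 1
  have hB : A⁻¹.PosSemidef := (hA ▸ hK.posDef_add_smul_one hτ).inv.posSemidef
  have hq : τ2 * (e ⬝ᵥ A⁻¹ *ᵥ e) ≤ 1 := by
    simpa [hA, e] using hK.mul_dotProduct_inv_add_smul_one_mulVec_le hτ e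
  have hcorr_nonneg : 0 ≤ τ2 ^ 2 * (e ⬝ᵥ A⁻¹ *ᵥ one) ^ 2 / (one ⬝ᵥ A⁻¹ *ᵥ one) :=
    div_nonneg (by positivity) (hB.dotProduct_mulVec_nonneg one)
  have hcorr_le : τ2 ^ 2 * (e ⬝ᵥ A⁻¹ *ᵥ one) ^ 2 / (one ⬝ᵥ A⁻¹ *ᵥ one) ≤
      τ2 ^ 2 * (e ⬝ᵥ A⁻¹ *ᵥ e) := by
    rw [mul_div_assoc]
    exact mul_le_mul_of_nonneg_left (hB.dotProduct_mulVec_sq_div_le e one) (sq_nonneg τ2)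
  have hlower : 0 ≤ τ2 - τ2 ^ 2 * (e ⬝ᵥ A⁻¹ *ᵥ e) := by nlinarith
  subst hs2
  refine ⟨⟨?_, ?_⟩, ?_, mul_nonneg hσ.le hlower⟩
  · exact mul_nonneg hσ.le (by linarith)
  · nlinarith
  · exact mul_le_mul_of_nonneg_left (by linarith) hσ.le

theorem stmt_4 (n : ℕ) (K : Matrix (Fin n) (Fin n) ℝ) (hK : K.PosSemidef)
    (hdiag : ∀ i, K i i = 1) (τ2 σ2 : ℝ) (hτ : 0 < τ2) (hσ : 0 < σ2) (i : Fin n)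
    (A : Matrix (Fin n) (Fin n) ℝ) (hA : A = K + τ2 • (1 : Matrix (Fin n) (Fin n) ℝ))
    (one : Fin n → ℝ) (hone : one = fun _ => 1)
    (s2 : ℝ)
    (hs2 : s2 = σ2 * (τ2 - τ2 ^ 2 * ((Pi.single i 1 : Fin n → ℝ) ⬝ᵥ A⁻¹.mulVec (Pi.single i 1)) +
        τ2 ^ 2 * ((Pi.single i 1 : Fin n → ℝ) ⬝ᵥ A⁻¹.mulVec one) ^ 2 /
          (one ⬝ᵥ A⁻¹.mulVec one))) :
    (0 ≤ s2 ∧ s2 ≤ 2 * σ2 * τ2) ∧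
    σ2 * (τ2 - τ2 ^ 2 * ((Pi.single i 1 : Fin n → ℝ) ⬝ᵥ A⁻¹.mulVec (Pi.single i 1))) ≤ s2 ∧
    0 ≤ σ2 * (τ2 - τ2 ^ 2 * ((Pi.single i 1 : Fin n → ℝ) ⬝ᵥ A⁻¹.mulVec (Pi.single i 1))) :=
  stmt_4_general n K hK τ2 σ2 hτ hσ i A hA one s2 hs2
end

section
/- (Large-nugget limit of predictive variance.) With A(τ²) = K + τ²I for K an n×n symmetric positive semidefinite matrix with unit diagonal, the expression s²(τ²)/σ² = τ² - τ⁴ e_iᵀ A(τ²)⁻¹ e_i + τ⁴ (e_iᵀ A(τ²)⁻¹ 𝟙)²/(𝟙ᵀ A(τ²)⁻¹ 𝟙) satisfies s²(τ²)/(σ²τ²) → 1/n as τ² → ∞. -/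
/-!
Write `t` for the nugget `τ²`. Factor `K + t I = t (I + t⁻¹ K)`, so that `(K + t I)⁻¹ = t⁻¹ B` with
`B = (I + t⁻¹ K)⁻¹`; this needs no invertibility, because the junk-valued matrix inverse also
commutes with nonzero scalars. After this substitution every power of `t` cancels and
`s²/(σ²t)` is a fixed continuous function of `B`. As `t → ∞`, `B → I`, where that function
equals `1 - 1 + 1/n`.
-/

open Matrix Filter Topology

namespace Matrix

variable {ι : Type*} [Fintype ι] [DecidableEq ι]

theorem inv_smul_of_field {𝕜 : Type*} [Field 𝕜] (k : 𝕜) (A : Matrix ι ι 𝕜) :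
    (k • A)⁻¹ = k⁻¹ • A⁻¹ := by
  rcases eq_or_ne k 0 with rfl | hk
  · simp
  by_cases hA : IsUnit A.det
  · exact inv_smul' A (Units.mk0 k hk) hA
  · have hkA : ¬IsUnit (k • A).det := by
      simpa [det_smul, hk] using hA
    rw [nonsing_inv_apply_not_isUnit _ hA, nonsing_inv_apply_not_isUnit _ hkA, smul_zero]

theorem inv_add_smul_one {𝕜 : Type*} [Field 𝕜] (K : Matrix ι ι 𝕜) {τ : 𝕜} (hτ : τ ≠ 0) :
    (K + τ • 1)⁻¹ = τ⁻¹ • (1 + τ⁻¹ • K)⁻¹ := by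
  rw [← inv_smul_of_field, smul_add, smul_smul, mul_inv_cancel₀ hτ, one_smul, add_comm]

theorem tendsto_inv_one_add_smul {𝕜 : Type*} [NontriviallyNormedField 𝕜] [CompleteSpace 𝕜]
    (K : Matrix ι ι 𝕜) : Tendsto (fun t : 𝕜 => (1 + t • K)⁻¹) (𝓝 0) (𝓝 1) := by
  have hA : Tendsto (fun t : 𝕜 => 1 + t • K) (𝓝 0) (𝓝 1) :=
    (continuous_const.add (continuous_id.smul continuous_const)).tendsto' _ _ (by simp)
  have hinv : ContinuousAt Inv.inv (1 : Matrix ι ι 𝕜) :=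
    continuousAt_matrix_inv _ (by rw [det_one]; exact NormedRing.inverse_continuousAt 1)
  have hcomp := hinv.tendsto.comp hA
  rwa [inv_one] at hcomp

end Matrix

variable {ι : Type*} [Fintype ι] [DecidableEq ι]

/-- With `B = (1 + τ⁻¹ • K)⁻¹` this is `s²(τ)/(σ²τ)`. -/
noncomputable def nuggetVarianceRatio (B : Matrix ι ι ℝ) (i : ι) : ℝ :=
  1 - Pi.single i 1 ⬝ᵥ B *ᵥ Pi.single i 1 +
    (Pi.single i 1 ⬝ᵥ B *ᵥ fun _ => 1) ^ 2 / ((fun _ => 1) ⬝ᵥ B *ᵥ fun _ => 1)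

theorem nuggetVarianceRatio_one (i : ι) : nuggetVarianceRatio 1 i = 1 / Fintype.card ι := by
  simp [nuggetVarianceRatio, ← Pi.one_def]

theorem continuousAt_nuggetVarianceRatio (i : ι) : ContinuousAt (nuggetVarianceRatio · i) 1 := by
  have hdot : ∀ v w : ι → ℝ, Continuous fun B : Matrix ι ι ℝ => v ⬝ᵥ B *ᵥ w := fun v w =>
    continuous_const.dotProduct (continuous_id.matrix_mulVec continuous_const)
  refine (continuous_const.sub (hdot _ _)).continuousAt.add
    (((hdot _ _).pow 2).continuousAt.div (hdot _ _).continuousAt ?_)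
  have : Nonempty ι := ⟨i⟩
  simp [← Pi.one_def, Fintype.card_ne_zero]

theorem div_variance_eq_nuggetVarianceRatio {σ2 τ : ℝ} (hσ : σ2 ≠ 0) (hτ : τ ≠ 0)
    (B : Matrix ι ι ℝ) (i : ι) :
    (σ2 * (τ - τ ^ 2 * (Pi.single i 1 ⬝ᵥ (τ⁻¹ • B) *ᵥ Pi.single i 1) +
        τ ^ 2 * (Pi.single i 1 ⬝ᵥ (τ⁻¹ • B) *ᵥ fun _ => 1) ^ 2 /
          ((fun _ => 1) ⬝ᵥ (τ⁻¹ • B) *ᵥ fun _ => 1))) / (σ2 * τ) = nuggetVarianceRatio B i := by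
  simp only [smul_mulVec, dotProduct_smul, smul_eq_mul, nuggetVarianceRatio]
  field_simp

theorem stmt_11_general (n : ℕ) (K : Matrix (Fin n) (Fin n) ℝ)
    (σ2 : ℝ) (hσ : 0 < σ2) (i : Fin n) :
    Filter.Tendsto
      (fun τ2 : ℝ =>
        (σ2 * (τ2 - τ2 ^ 2 * ((Pi.single i 1 : Fin n → ℝ) ⬝ᵥ
              (K + τ2 • (1 : Matrix (Fin n) (Fin n) ℝ))⁻¹.mulVec (Pi.single i 1)) +
            τ2 ^ 2 * ((Pi.single i 1 : Fin n → ℝ) ⬝ᵥ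
                (K + τ2 • (1 : Matrix (Fin n) (Fin n) ℝ))⁻¹.mulVec (fun _ => 1)) ^ 2 /
              ((fun _ => (1 : ℝ)) ⬝ᵥ
                (K + τ2 • (1 : Matrix (Fin n) (Fin n) ℝ))⁻¹.mulVec (fun _ => 1)))) /
          (σ2 * τ2))
      Filter.atTop (nhds (1 / n)) := by
  have hlim : Tendsto (fun τ : ℝ => nuggetVarianceRatio (1 + τ⁻¹ • K)⁻¹ i) atTop (𝓝 (1 / n)) := by
    have hone := nuggetVarianceRatio_one i
    rw [Fintype.card_fin] at hone
    rw [← hone]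
    exact (continuousAt_nuggetVarianceRatio i).tendsto.comp
      ((tendsto_inv_one_add_smul K).comp tendsto_inv_atTop_zero)
  refine hlim.congr' ?_
  filter_upwards [eventually_ne_atTop 0] with τ hτ
  rw [inv_add_smul_one K hτ, div_variance_eq_nuggetVarianceRatio hσ.ne' hτ]

theorem stmt_11 (n : ℕ) (K : Matrix (Fin n) (Fin n) ℝ) (hK : K.PosSemidef)
    (hdiag : ∀ i, K i i = 1) (σ2 : ℝ) (hσ : 0 < σ2) (i : Fin n) :
    Filter.Tendsto
      (fun τ2 : ℝ =>
        (σ2 * (τ2 - τ2 ^ 2 * ((Pi.single i 1 : Fin n → ℝ) ⬝ᵥ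
              (K + τ2 • (1 : Matrix (Fin n) (Fin n) ℝ))⁻¹.mulVec (Pi.single i 1)) +
            τ2 ^ 2 * ((Pi.single i 1 : Fin n → ℝ) ⬝ᵥ
                (K + τ2 • (1 : Matrix (Fin n) (Fin n) ℝ))⁻¹.mulVec (fun _ => 1)) ^ 2 /
              ((fun _ => (1 : ℝ)) ⬝ᵥ
                (K + τ2 • (1 : Matrix (Fin n) (Fin n) ℝ))⁻¹.mulVec (fun _ => 1)))) /
          (σ2 * τ2))
      Filter.atTop (nhds (1 / n)) :=
  stmt_11_general n K σ2 hσ i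
end
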